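/- Let S be an ordered multiset of n integers taking exactly c distinct values, where n = k·c + 1 for a positive integer k and c is a perfect square. Then S contains a monotonic subsequence of length at least √c + n/c − 2. -/

import Mathlib

/-!
Let `x i` and `y i` be the lengths of the longest nondecreasing and nonincreasing subsequences
ending at position `i`, and `o i` the number of occurrences of the value `a i` up to position `i`.
As in Erdős–Szekeres, `i ↦ (x i, y i)` is injective; so is `i ↦ (a i, o i)`, and
`o i ≤ min (x i) (y i)` since equal values form both kinds of subsequence. If no monotone
subsequence is longer than `N`, at most `c t` positions have `o i ≤ t`, and the others have
`x i, y i ∈ (t, N]`, so `n ≤ c t + (N - t)²`. For `t = k - 1`, `N = d + k - 1` this says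
`n ≤ c k`, which is false; hence some monotone subsequence has length `d + k > √c + n / c - 2`.
-/

open Finset OrderDual

theorem exists_strictMono_monotone_comp_of_monotoneOn {ι α : Type*} [LinearOrder ι] [Preorder α]
    {f : ι → α} {s : Finset ι} (hs : MonotoneOn f s) :
    ∃ σ : Fin #s → ι, StrictMono σ ∧ Monotone (f ∘ σ) :=
  ⟨s.orderEmbOfFin rfl, (s.orderEmbOfFin rfl).strictMono, fun _ _ hpq ↦
    hs (s.orderEmbOfFin_mem rfl _) (s.orderEmbOfFin_mem rfl _) ((s.orderEmbOfFin rfl).monotone hpq)⟩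

section

variable {ι α : Type*} [Fintype ι] [LinearOrder ι] [LinearOrder α]

open Classical in
noncomputable def longestMonotoneEndingAt (f : ι → α) (i : ι) : ℕ :=
  ({s : Finset ι | IsGreatest (s : Set ι) i ∧ MonotoneOn f s} : Finset (Finset ι)).sup card

open Classical in
noncomputable def occurrencesUpTo (f : ι → α) (i : ι) : ℕ :=
  #{p | p ≤ i ∧ f p = f i}

variable (f : ι → α)

theorem card_le_longestMonotoneEndingAt {i : ι} {s : Finset ι} (hi : IsGreatest (s : Set ι) i)
    (hs : MonotoneOn f s) : #s ≤ longestMonotoneEndingAt f i := by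
  classical
  exact le_sup (f := card) (by simp [hi, hs])

theorem exists_card_eq_longestMonotoneEndingAt (i : ι) : ∃ s : Finset ι,
    IsGreatest (s : Set ι) i ∧ MonotoneOn f s ∧ #s = longestMonotoneEndingAt f i := by
  classical
  obtain ⟨s, hs, hcard⟩ := exists_mem_eq_sup
    ({s : Finset ι | IsGreatest (s : Set ι) i ∧ MonotoneOn f s} : Finset (Finset ι))
    ⟨{i}, by simp [isGreatest_singleton]⟩ card
  exact ⟨s, (mem_filter.1 hs).2.1, (mem_filter.1 hs).2.2, hcard.symm⟩

theorem exists_strictMono_monotone_comp_of_longestMonotoneEndingAt (i : ι) :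
    ∃ σ : Fin (longestMonotoneEndingAt f i) → ι, StrictMono σ ∧ Monotone (f ∘ σ) := by
  obtain ⟨s, -, hs, hcard⟩ := exists_card_eq_longestMonotoneEndingAt f i
  exact hcard ▸ exists_strictMono_monotone_comp_of_monotoneOn hs

theorem longestMonotoneEndingAt_lt {i j : ι} (hij : i < j) (hf : f i ≤ f j) :
    longestMonotoneEndingAt f i < longestMonotoneEndingAt f j := by
  classical
  obtain ⟨s, hi, hs, hcard⟩ := exists_card_eq_longestMonotoneEndingAt f i
  have hj : IsGreatest (insert j s : Set ι) j :=
    ⟨Set.mem_insert j _, upperBounds_insert j s ▸ ⟨le_rfl, fun p hp ↦ (hi.2 hp).trans hij.le⟩⟩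
  have hjs : MonotoneOn f (insert j s : Set ι) := Set.monotoneOn_insert_iff.2
    ⟨fun p hp _ ↦ (hs hp hi.1 (hi.2 hp)).trans hf,
     fun p hp hjp ↦ absurd ((hi.2 hp).trans_lt hij) hjp.not_gt, hs⟩
  calc longestMonotoneEndingAt f i < #(insert j s) := by
        rw [card_insert_of_notMem fun h ↦ (hi.2 h).not_gt hij]; omega
    _ ≤ longestMonotoneEndingAt f j :=
        card_le_longestMonotoneEndingAt f (by simpa using hj) (by simpa using hjs)

theorem occurrencesUpTo_le_longestMonotoneEndingAt (i : ι) :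
    occurrencesUpTo f i ≤ longestMonotoneEndingAt f i := by
  classical
  refine card_le_longestMonotoneEndingAt f ⟨by simp, fun p hp ↦ by simp_all⟩ ?_
  intro p hp q hq _
  simp_all

theorem occurrencesUpTo_toDual_comp : occurrencesUpTo (toDual ∘ f) = occurrencesUpTo f := rfl

theorem occurrencesUpTo_lt {i j : ι} (hij : i < j) (hf : f i = f j) :
    occurrencesUpTo f i < occurrencesUpTo f j := by
  classical
  refine card_lt_card ⟨fun p hp ↦ ?_, fun h ↦ ?_⟩
  · simp only [mem_filter, mem_univ, true_and] at hp ⊢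
    exact ⟨hp.1.trans hij.le, hp.2.trans hf⟩
  · simpa [hij.not_ge] using @h j

theorem injective_longestMonotoneEndingAt_prod_toDual :
    Function.Injective fun i ↦
      (longestMonotoneEndingAt f i, longestMonotoneEndingAt (toDual ∘ f) i) := by
  refine .of_lt_imp_ne fun i j hij heq ↦ ?_
  rcases le_total (f i) (f j) with h | h
  · exact (longestMonotoneEndingAt_lt f hij h).ne (congrArg Prod.fst heq)
  · exact (longestMonotoneEndingAt_lt (toDual ∘ f) hij (toDual_le_toDual.2 h)).ne
      (congrArg Prod.snd heq)

theorem injective_prod_occurrencesUpTo : Function.Injective fun i ↦ (f i, occurrencesUpTo f i) :=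
  .of_lt_imp_ne fun _ _ hij heq ↦
    (occurrencesUpTo_lt f hij (congrArg Prod.fst heq)).ne (congrArg Prod.snd heq)

theorem card_filter_occurrencesUpTo_le (t : ℕ) [DecidablePred fun i ↦ occurrencesUpTo f i ≤ t] :
    #{i | occurrencesUpTo f i ≤ t} ≤ #(univ.image f) * t := by
  classical
  calc #{i | occurrencesUpTo f i ≤ t} ≤ #(univ.image f ×ˢ Icc 1 t) := by
        refine card_le_card_of_injOn _ (fun i hi ↦ ?_) (injective_prod_occurrencesUpTo f).injOn
        simp only [coe_filter, mem_univ, true_and, Set.mem_ofPred_eq] at hi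
        have hpos : 0 < occurrencesUpTo f i := card_pos.2 ⟨i, by simp⟩
        simp only [coe_product, coe_image, coe_univ, Set.image_univ, coe_Icc, Set.mem_prod,
          Set.mem_range_self, Set.mem_Icc, true_and]
        omega
    _ = #(univ.image f) * t := by simp

theorem card_filter_not_occurrencesUpTo_le {N : ℕ} (hN : ∀ i, longestMonotoneEndingAt f i ≤ N ∧
    longestMonotoneEndingAt (toDual ∘ f) i ≤ N) (t : ℕ)
    [DecidablePred fun i ↦ ¬ occurrencesUpTo f i ≤ t] :
    #{i | ¬ occurrencesUpTo f i ≤ t} ≤ (N - t) ^ 2 := by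
  calc #{i | ¬ occurrencesUpTo f i ≤ t} ≤ #(Ioc t N ×ˢ Ioc t N) := by
        refine card_le_card_of_injOn _ (fun i hi ↦ ?_)
          (injective_longestMonotoneEndingAt_prod_toDual f).injOn
        simp only [coe_filter, mem_univ, true_and, Set.mem_ofPred_eq, not_le] at hi
        have hdual := occurrencesUpTo_le_longestMonotoneEndingAt (toDual ∘ f) i
        rw [occurrencesUpTo_toDual_comp] at hdual
        simp only [coe_product, coe_Ioc, Set.mem_prod, Set.mem_Ioc]
        exact ⟨⟨hi.trans_le (occurrencesUpTo_le_longestMonotoneEndingAt f i), (hN i).1⟩,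
          hi.trans_le hdual, (hN i).2⟩
    _ = (N - t) ^ 2 := by simp [sq]

theorem exists_monotone_or_antitone_subseq_of_lt_card (t N : ℕ)
    (h : #(univ.image f) * t + (N - t) ^ 2 < Fintype.card ι) :
    ∃ (m : ℕ) (σ : Fin m → ι), StrictMono σ ∧ (Monotone (f ∘ σ) ∨ Antitone (f ∘ σ)) ∧ N < m := by
  classical
  by_contra! hlong
  have hN : ∀ i, longestMonotoneEndingAt f i ≤ N ∧ longestMonotoneEndingAt (toDual ∘ f) i ≤ N := by
    intro i
    obtain ⟨σ, hσ, hmono⟩ := exists_strictMono_monotone_comp_of_longestMonotoneEndingAt f i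
    obtain ⟨τ, hτ, hanti⟩ :=
      exists_strictMono_monotone_comp_of_longestMonotoneEndingAt (toDual ∘ f) i
    exact ⟨hlong _ σ hσ (.inl hmono), hlong _ τ hτ (.inr (monotone_toDual_comp_iff.1 hanti))⟩
  have := card_filter_add_card_filter_not (s := univ) fun i ↦ occurrencesUpTo f i ≤ t
  have := card_filter_occurrencesUpTo_le f t
  have := card_filter_not_occurrencesUpTo_le f hN t
  simp only [card_univ] at *
  omega

end

theorem sqrt_add_div_sub_two_le {n c d k : ℕ} (hc : c = d ^ 2) (hn : n = k * c + 1) :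
    √(c : ℝ) + n / c - 2 ≤ d + k - 1 := by
  have hsqrt : √(c : ℝ) = d := by rw [hc, Nat.cast_pow, Real.sqrt_sq d.cast_nonneg]
  have hdiv : (n : ℝ) / c ≤ k + 1 := by
    rcases c.eq_zero_or_pos with rfl | hpos
    · simp only [Nat.cast_zero, div_zero]; positivity
    · rw [div_le_iff₀ (by exact_mod_cast hpos), hn]
      push_cast
      nlinarith [(Nat.one_le_cast (α := ℝ)).2 hpos]
  linarith

theorem multiset_monotone_subseq (n c d k : ℕ) (hk : 1 ≤ k) (hc : c = d ^ 2)
    (hn : n = k * c + 1) (a : Fin n → ℤ)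
    (hcard : (Finset.univ.image a).card = c) :
    ∃ (m : ℕ) (σ : Fin m → Fin n), StrictMono σ ∧
      (Monotone (a ∘ σ) ∨ Antitone (a ∘ σ)) ∧
      (m : ℝ) ≥ Real.sqrt c + (n : ℝ) / c - 2 := by
  have hcount : #(univ.image a) * (k - 1) + (d + k - 1 - (k - 1)) ^ 2 < Fintype.card (Fin n) := by
    rw [hcard, Fintype.card_fin, show d + k - 1 - (k - 1) = d by omega, ← hc, hn]
    obtain ⟨j, rfl⟩ : ∃ j, k = j + 1 := ⟨k - 1, by omega⟩
    rw [add_tsub_cancel_right]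
    linarith
  obtain ⟨m, σ, hσ, hmono, hm⟩ := exists_monotone_or_antitone_subseq_of_lt_card a _ _ hcount
  refine ⟨m, σ, hσ, hmono, ?_⟩
  have : (d : ℝ) + k ≤ m := by exact_mod_cast (by omega : d + k ≤ m)
  linarith [sqrt_add_div_sub_two_le hc hn]
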